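/- Fix γ,δ ∈ ℂ and let n ≥ 1. For every s ∈ ℂ with (2s+γ+δ)·(2s+γ+δ+1)·(2s+γ+δ+2) ≠ 0, χ_1(s)·(𝔻(𝔻χ_n))(s) = n·(n−1)·χ_{n−1}(s), where χ_1(s) = −λ(s) = −s(s+γ+δ+1). -/

import Mathlib

open Complex Finset

/-- Divided-difference operator on the quadratic lattice λ(s) = s(s+γ+δ+1):
(𝔻f)(s) = (f(s+1/2) − f(s−1/2))/(2s+γ+δ+1). -/
noncomputable def Dq (γ δ : ℂ) (f : ℂ → ℂ) (s : ℂ) : ℂ :=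
  (f (s + 1/2) - f (s - 1/2)) / (2*s + γ + δ + 1)

/-- χ_n(s) = ∏_{k=0}^{n−1}(k − s)(s + γ + δ + 1 + k). -/
noncomputable def chi (γ δ : ℂ) (n : ℕ) (s : ℂ) : ℂ :=
  ∏ k ∈ Finset.range n, (((k : ℂ) - s) * (s + γ + δ + 1 + k))

open Polynomial

/-!
With `c = γ + δ + 1`, `χ_n(s) = (-s)_n (s + c)_n` is a product of two rising factorials, and a
two-term identity for rising factorials shows that `𝔻` lowers `n` by one at the cost of shifting
`s` by `-1/2` and `γ` by `+1`: `𝔻χ_n = -n · χ^{γ+1}_{n-1}(· - 1/2)`. Applying this twice gives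
`n (n - 1) χ^{γ+2}_{n-2}(s - 1)`, and splitting off the factor `k = 0` of `χ_{n-1}(s)` gives
`χ_{n-1}(s) = -λ(s) · χ^{γ+2}_{n-2}(s - 1)`.
-/

lemma ascPochhammer_eval_eq_prod_range {R : Type*} [CommSemiring R] (n : ℕ) (r : R) :
    (ascPochhammer R n).eval r = ∏ k ∈ range n, (r + k) := by
  induction n with
  | zero => simp
  | succ n ih => rw [ascPochhammer_succ_eval, ih, prod_range_succ]

lemma ascPochhammer_succ_eval_left {R : Type*} [CommSemiring R] (n : ℕ) (r : R) :
    (ascPochhammer R (n + 1)).eval r = r * (ascPochhammer R n).eval (r + 1) := by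
  simp [ascPochhammer_succ_left]

lemma ascPochhammer_succ_eval_mul_sub {R : Type*} [CommRing R] (n : ℕ) (a b : R) :
    (ascPochhammer R (n + 1)).eval a * (ascPochhammer R (n + 1)).eval b
      - (ascPochhammer R (n + 1)).eval (a + 1) * (ascPochhammer R (n + 1)).eval (b - 1)
      = (n + 1) * (a - b + 1) * (ascPochhammer R n).eval (a + 1) * (ascPochhammer R n).eval b := by
  rw [ascPochhammer_succ_eval_left _ a, ascPochhammer_succ_eval _ (a + 1),
    ascPochhammer_succ_eval _ b, ascPochhammer_succ_eval_left _ (b - 1), sub_add_cancel]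
  ring

lemma chi_eq_ascPochhammer (γ δ : ℂ) (n : ℕ) (s : ℂ) :
    chi γ δ n s = (ascPochhammer ℂ n).eval (-s) * (ascPochhammer ℂ n).eval (s + γ + δ + 1) := by
  rw [chi, ascPochhammer_eval_eq_prod_range, ascPochhammer_eval_eq_prod_range,
    ← prod_mul_distrib]
  exact prod_congr rfl fun k _ => by ring

lemma chi_succ (γ δ : ℂ) (n : ℕ) (s : ℂ) :
    chi γ δ (n + 1) s = -(s * (s + γ + δ + 1)) * chi (γ + 2) δ n (s - 1) := by
  rw [chi, prod_range_succ', chi, mul_comm]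
  congr 1
  · push_cast; ring
  · exact prod_congr rfl fun k _ => by push_cast; ring

lemma Dq_congr {γ δ : ℂ} {f g : ℂ → ℂ} {s : ℂ} (hplus : f (s + 1/2) = g (s + 1/2))
    (hminus : f (s - 1/2) = g (s - 1/2)) : Dq γ δ f s = Dq γ δ g s := by
  simp only [Dq, hplus, hminus]

lemma Dq_const_mul (γ δ c : ℂ) (f : ℂ → ℂ) (s : ℂ) :
    Dq γ δ (fun t => c * f t) s = c * Dq γ δ f s := by
  simp only [Dq, ← mul_sub, mul_div_assoc]

lemma Dq_comp_sub_half (γ δ : ℂ) (f : ℂ → ℂ) (s : ℂ) :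
    Dq γ δ (fun t => f (t - 1/2)) s = Dq (γ + 1) δ f (s - 1/2) := by
  simp only [Dq]
  congr 1
  · ring_nf
  · ring

lemma Dq_chi (γ δ : ℂ) (n : ℕ) {s : ℂ} (hs : 2*s + γ + δ + 1 ≠ 0) :
    Dq γ δ (chi γ δ n) s = -n * chi (γ + 1) δ (n - 1) (s - 1/2) := by
  cases n with
  | zero => simp [Dq, chi]
  | succ m =>
    rw [Dq, div_eq_iff hs, Nat.add_sub_cancel]
    simp only [chi_eq_ascPochhammer]
    rw [show s - 1/2 + (γ + 1) + δ + 1 = s + 1/2 + γ + δ + 1 by ring]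
    have key := ascPochhammer_succ_eval_mul_sub m (-(s + 1/2)) (s + 1/2 + γ + δ + 1)
    rw [show -(s + 1/2) + 1 = -(s - 1/2) by ring,
      show s + 1/2 + γ + δ + 1 - 1 = s - 1/2 + γ + δ + 1 by ring] at key
    push_cast
    linear_combination key

lemma Dq_Dq_chi (γ δ : ℂ) (n : ℕ) {s : ℂ} (h₀ : 2*s + γ + δ ≠ 0) (h₁ : 2*s + γ + δ + 1 ≠ 0)
    (h₂ : 2*s + γ + δ + 2 ≠ 0) :
    Dq γ δ (Dq γ δ (chi γ δ n)) s = n * (n - 1 : ℕ) * chi (γ + 2) δ (n - 2) (s - 1) := by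
  have hplus : 2*(s + 1/2) + γ + δ + 1 ≠ 0 := by convert h₂ using 1; ring
  have hminus : 2*(s - 1/2) + γ + δ + 1 ≠ 0 := by convert h₀ using 1; ring
  have hshift : 2*(s - 1/2) + (γ + 1) + δ + 1 ≠ 0 := by convert h₁ using 1; ring
  rw [Dq_congr (g := fun t => -n * chi (γ + 1) δ (n - 1) (t - 1/2))
      (Dq_chi γ δ n hplus) (Dq_chi γ δ n hminus),
    Dq_const_mul, Dq_comp_sub_half, Dq_chi (γ + 1) δ (n - 1) hshift,
    Nat.sub_sub, show γ + 1 + 1 = γ + 2 by ring, show s - 1/2 - 1/2 = s - 1 by ring]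
  ring

theorem stmt_11_general (γ δ : ℂ) (n : ℕ) :
    ∀ s : ℂ, (2*s+γ+δ) * (2*s+γ+δ+1) * (2*s+γ+δ+2) ≠ 0 →
      (-(s * (s + γ + δ + 1))) * Dq γ δ (Dq γ δ (fun t => chi γ δ n t)) s
        = (n : ℂ) * ((n : ℂ) - 1) * chi γ δ (n-1) s := by
  intro s hs
  rw [Dq_Dq_chi γ δ n (left_ne_zero_of_mul (left_ne_zero_of_mul hs))
    (right_ne_zero_of_mul (left_ne_zero_of_mul hs)) (right_ne_zero_of_mul hs)]
  rcases n with _ | _ | m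
  · simp
  · simp
  · rw [show m + 2 - 1 = m + 1 by omega, chi_succ, show m + 2 - 2 = m by omega]
    push_cast
    ring

theorem stmt_11 (γ δ : ℂ) (n : ℕ) (hn : 1 ≤ n) :
    ∀ s : ℂ, (2*s+γ+δ) * (2*s+γ+δ+1) * (2*s+γ+δ+2) ≠ 0 →
      (-(s * (s + γ + δ + 1))) * Dq γ δ (Dq γ δ (fun t => chi γ δ n t)) s
        = (n : ℂ) * ((n : ℂ) - 1) * chi γ δ (n-1) s :=
  stmt_11_general γ δ n
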